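/- arXiv:2105.03064 — 5 statements merged into one kernel-verified Lean document; each statement's English description precedes it below -/
import Mathlib

section
/- For all Ω ⊆ [n] and S ⊆ [n], f(Ω,S) ≥ max_{i ∈ Ω^c ∩ S^c} ℓ_{i,s} + max_{j ∈ Ω ∩ S} ℓ_{d,j}, where a maximum over the empty set is taken to be 0; moreover equality holds whenever Ω^c ∩ S^c = ∅ or Ω ∩ S = ∅. -/
open Finset

/-- The η×η shift-type block `D^{η−m}` over GF(2): entry (i,j) is 1 iff
`j < m` and `i = j + (η − m)`. -/
def Dblk (η m : ℕ) : Matrix (Fin η) (Fin η) (ZMod 2) :=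
  Matrix.of fun i j => if (j : ℕ) < m ∧ (i : ℕ) = (j : ℕ) + (η - m) then 1 else 0

/-- Row-block index set of the transfer matrix: `{d} ∪ (Ωᶜ ∩ Sᶜ)`, with `0`
playing the role of the destination `d` and relays being `1,…,n`. -/
def rowIdx (n : ℕ) (Ω S : Finset ℕ) : Finset ℕ :=
  insert 0 ((Finset.Icc 1 n \ Ω) \ S)

/-- Column-block index set of the transfer matrix: `{s} ∪ (Ω ∩ S)`, with `0`
playing the role of the source `s`. -/
def colIdx (Ω S : Finset ℕ) : Finset ℕ :=
  insert 0 (Ω ∩ S)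

/-- `f(Ω,S)`: rank over GF(2) of the transfer matrix `F_{Ω,S}`, whose block in
row block `i` and column block `j` is `D^{η−ℓ i j}` (here `ℓ i j` encodes
`ℓ_{i,j}`, with index `0` standing for `d` in the first slot and for `s` in the
second slot). -/
noncomputable def fRank (n η : ℕ) (ℓ : ℕ → ℕ → ℕ) (Ω S : Finset ℕ) : ℕ :=
  Matrix.rank
    (Matrix.of fun (p : ↥(rowIdx n Ω S) × Fin η) (q : ↥(colIdx Ω S) × Fin η) =>
      Dblk η (ℓ (p.1 : ℕ) (q.1 : ℕ)) p.2 q.2)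

/-- The `(n+2) × (n+2)` real matrix `P`. -/
noncomputable def Pmat (n η : ℕ) (ℓ : ℕ → ℕ → ℕ) : Matrix (Fin (n+2)) (Fin (n+2)) ℝ :=
  Matrix.of fun i j =>
    if (i : ℕ) = 0 then (if (j : ℕ) = 0 then 0 else 1)
    else if (j : ℕ) = 0 then 1
    else -(fRank n η ℓ (Finset.Icc (i : ℕ) n)
        (if (j : ℕ) = n + 1 then (∅ : Finset ℕ) else {(j : ℕ)}) : ℝ)

/-- `P̃_i`: determinant of the submatrix of `P` obtained by deleting row `0`
and column `i`. -/
noncomputable def Pminor (n η : ℕ) (ℓ : ℕ → ℕ → ℕ) (i : Fin (n+2)) : ℝ :=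
  ((Pmat n η ℓ).submatrix Fin.succ i.succAbove).det

/-- Feasibility for the LP defining the approximate capacity `C^LD`. -/
def FeasLD (n η : ℕ) (ℓ : ℕ → ℕ → ℕ) (t : ℝ) (lam : Finset ℕ → ℝ) : Prop :=
  (∀ S ⊆ Finset.Icc 1 n, 0 ≤ lam S) ∧
  (∑ S ∈ (Finset.Icc 1 n).powerset, lam S) ≤ 1 ∧
  ∀ Ω ⊆ Finset.Icc 1 n,
    t ≤ ∑ S ∈ (Finset.Icc 1 n).powerset, lam S * (fRank n η ℓ Ω S : ℝ)

/-- The approximate capacity `C^LD`. -/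
noncomputable def CLD (n η : ℕ) (ℓ : ℕ → ℕ → ℕ) : ℝ :=
  sSup {t : ℝ | ∃ lam, FeasLD n η ℓ t lam}

/-- Feasibility for the relaxed LP defining `C^U`. -/
def FeasU (n η : ℕ) (ℓ : ℕ → ℕ → ℕ) (t : ℝ) (lam : Finset ℕ → ℝ) : Prop :=
  (∀ S ⊆ Finset.Icc 1 n, 0 ≤ lam S) ∧
  (∑ S ∈ (Finset.Icc 1 n).powerset, lam S) ≤ 1 ∧
  ∀ i ∈ Finset.Icc 1 (n+1),
    t ≤ ∑ S ∈ (Finset.Icc 1 n).powerset, lam S * (fRank n η ℓ (Finset.Icc i n) S : ℝ)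

/-- The relaxed value `C^U`. -/
noncomputable def CU (n η : ℕ) (ℓ : ℕ → ℕ → ℕ) : ℝ :=
  sSup {t : ℝ | ∃ lam, FeasU n η ℓ t lam}

/-- The set `Ŝ = {∅, {1}, …, {n}}` of states with at most one relay transmitting. -/
def SHat (n : ℕ) : Finset (Finset ℕ) :=
  insert ∅ ((Finset.Icc 1 n).image fun i => {i})

open Fin.NatCast in
/-- The schedule `λ*` induced by a solution vector `v = (t*, λ*_{{1}}, …, λ*_{{n}}, λ*_∅)`
of the linear system `P·v = e₀`: it assigns `v i` to the state `{i}` (for `i ∈ [n]`),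
`v (n+1)` to `∅`, and `0` to any other state. -/
noncomputable def lamStar (n : ℕ) (v : Fin (n+2) → ℝ) (S : Finset ℕ) : ℝ :=
  (if S = ∅ then v (Fin.last (n+1)) else 0) +
  ∑ i ∈ Finset.Icc 1 n, if S = {i} then v (i : Fin (n+2)) else 0

/-!
The block `(d, s)` of the transfer matrix is `D^η = 0`, and `D^{η-m}` maps the first `m`
coordinates onto the last `m`. Pick `i` maximising `ℓ_{i,s}` and `j` maximising `ℓ_{d,j}`
(or `d`, `s` themselves when the relevant sets are empty). The last `ℓ_{d,j}` rows of block row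
`d` and the last `ℓ_{i,s}` rows of block row `i`, against the first `ℓ_{d,j}` columns of block
column `j` and the first `ℓ_{i,s}` columns of block column `s`, form a block lower-triangular
submatrix with identity diagonal blocks; this gives the lower bound. If `d` is the only row
block, every nonzero row lies among its last `max_j ℓ_{d,j}` rows; if `s` is the only column
block, every nonzero column lies among its first `max_i ℓ_{i,s}` columns. This gives the
matching upper bounds.
-/

namespace Matrix

variable {K : Type*} [Field K] {m n : Type*} [Fintype n]

theorem rank_le_card_of_col_support_subset [Fintype m] (A : Matrix m n K) (s : Finset n)
    (hz : Function.support A.col ⊆ s) : A.rank ≤ s.card := by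
  rw [← rank_transpose]
  exact Aᵀ.rank_le_card_of_support_subset s hz

theorem card_add_card_le_rank {α β : Type*} [Fintype α] [Fintype β] [DecidableEq α]
    [DecidableEq β] (A : Matrix m n K) (r₁ : α → m) (c₁ : α → n) (r₂ : β → m) (c₂ : β → n)
    (h₁ : A.submatrix r₁ c₁ = 1) (h₁₂ : A.submatrix r₁ c₂ = 0) (h₂ : A.submatrix r₂ c₂ = 1) :
    Fintype.card α + Fintype.card β ≤ A.rank := by
  have hblocks : A.submatrix (Sum.elim r₁ r₂) (Sum.elim c₁ c₂) =
      fromBlocks 1 0 (A.submatrix r₂ c₁) 1 := by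
    rw [← h₁, ← h₁₂, ← h₂]
    ext (i | i) (j | j) <;> rfl
  have hunit : IsUnit (A.submatrix (Sum.elim r₁ r₂) (Sum.elim c₁ c₂)) := by
    simp [isUnit_iff_isUnit_det, hblocks]
  calc Fintype.card α + Fintype.card β
      = (A.submatrix (Sum.elim r₁ r₂) (Sum.elim c₁ c₂)).rank := by
        rw [rank_of_isUnit _ hunit, Fintype.card_sum]
    _ ≤ A.rank := rank_submatrix_le _ _ _

end Matrix

theorem Dblk_zero (η : ℕ) : Dblk η 0 = 0 := by
  ext r c
  simp [Dblk]

theorem Dblk_apply_natAdd_castLE {η m : ℕ} (hm : m ≤ η) (r c : Fin m) :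
    Dblk η m (Fin.cast (Nat.sub_add_cancel hm) (Fin.natAdd (η - m) r)) (Fin.castLE hm c) =
      (1 : Matrix (Fin m) (Fin m) (ZMod 2)) r c := by
  simp only [Dblk, Matrix.of_apply, Matrix.one_apply, Fin.ext_iff, Fin.val_cast,
    Fin.val_natAdd, Fin.val_castLE]
  have := c.isLt
  split_ifs <;> first | rfl | omega

theorem Dblk_apply_eq_zero_of_le_col {η m : ℕ} {r c : Fin η} (h : m ≤ c) :
    Dblk η m r c = 0 := by
  simp only [Dblk, Matrix.of_apply]
  exact if_neg fun hrc => by omega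

theorem Dblk_apply_eq_zero_of_row_lt {η m : ℕ} {r c : Fin η} (h : r < η - m) :
    Dblk η m r c = 0 := by
  simp only [Dblk, Matrix.of_apply]
  exact if_neg fun hrc => by omega

def shiftBlockMatrix {P Q : Type*} (η : ℕ) (L : P → Q → ℕ) :
    Matrix (P × Fin η) (Q × Fin η) (ZMod 2) :=
  Matrix.of fun p q => Dblk η (L p.1 q.1) p.2 q.2

section shiftBlockMatrix

variable {P Q : Type*} [Fintype Q] {η : ℕ} (L : P → Q → ℕ)

theorem le_rank_shiftBlockMatrix {p₀ p : P} {q₀ q : Q} (h₀₀ : L p₀ q₀ = 0)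
    (hp : L p q₀ ≤ η) (hq : L p₀ q ≤ η) :
    L p q₀ + L p₀ q ≤ (shiftBlockMatrix η L).rank := by
  have h := (shiftBlockMatrix η L).card_add_card_le_rank
    (fun r => (p₀, Fin.cast (Nat.sub_add_cancel hq) (Fin.natAdd _ r)))
    (fun c => (q, Fin.castLE hq c))
    (fun r => (p, Fin.cast (Nat.sub_add_cancel hp) (Fin.natAdd _ r)))
    (fun c => (q₀, Fin.castLE hp c))
    (by ext r c; exact Dblk_apply_natAdd_castLE hq r c)
    (by ext r c; simp [shiftBlockMatrix, h₀₀, Dblk_zero])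
    (by ext r c; exact Dblk_apply_natAdd_castLE hp r c)
  simpa [add_comm] using h

theorem rank_shiftBlockMatrix_le_of_subsingleton_left [Subsingleton P] (p₀ : P) {b : ℕ}
    (hb : b ≤ η) (hL : ∀ q, L p₀ q ≤ b) : (shiftBlockMatrix η L).rank ≤ b := by
  classical
  let bottomRows : Fin b → P × Fin η :=
    fun r => (p₀, Fin.cast (Nat.sub_add_cancel hb) (Fin.natAdd _ r))
  calc (shiftBlockMatrix η L).rank ≤ (univ.image bottomRows).card := by
        refine Matrix.rank_le_card_of_support_subset _ _ fun ⟨p, r⟩ hrow => ?_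
        obtain rfl := Subsingleton.elim p p₀
        have hr : η - b ≤ r := by
          by_contra hlt
          exact hrow (funext fun q => Dblk_apply_eq_zero_of_row_lt (m := L p q.1) (r := r)
            (by have := hL q.1; omega))
        exact mem_image.2
          ⟨⟨r - (η - b), by omega⟩, mem_univ _, by ext <;> simp [bottomRows]; omega⟩
    _ ≤ b := card_image_le.trans (by simp)

theorem rank_shiftBlockMatrix_le_of_subsingleton_right [Fintype P] [Subsingleton Q]
    (q₀ : Q) {a : ℕ} (ha : a ≤ η) (hL : ∀ p, L p q₀ ≤ a) : (shiftBlockMatrix η L).rank ≤ a := by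
  classical
  let leftCols : Fin a → Q × Fin η := fun c => (q₀, Fin.castLE ha c)
  calc (shiftBlockMatrix η L).rank ≤ (univ.image leftCols).card := by
        refine Matrix.rank_le_card_of_col_support_subset _ _ fun ⟨q, c⟩ hcol => ?_
        obtain rfl := Subsingleton.elim q q₀
        have hc : c < a := by
          by_contra hle
          exact hcol (funext fun p => Dblk_apply_eq_zero_of_le_col (m := L p.1 q) (c := c)
            (by have := hL p.1; omega))
        exact mem_image.2 ⟨⟨c, hc⟩, mem_univ _, rfl⟩
    _ ≤ a := card_image_le.trans (by simp)

end shiftBlockMatrix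

theorem fRank_eq_rank_shiftBlockMatrix (n η : ℕ) (ℓ : ℕ → ℕ → ℕ) (Ω S : Finset ℕ) :
    fRank n η ℓ Ω S =
      (shiftBlockMatrix η fun (i : rowIdx n Ω S) (j : colIdx Ω S) => ℓ i j).rank :=
  rfl

section transferMatrix

variable {n : ℕ} {ℓ : ℕ → ℕ → ℕ} {Ω S : Finset ℕ}

theorem zero_mem_rowIdx : 0 ∈ rowIdx n Ω S := mem_insert_self _ _

theorem zero_mem_colIdx : 0 ∈ colIdx Ω S := mem_insert_self _ _

theorem rowIdx_eq_singleton (h : (Icc 1 n \ Ω) \ S = ∅) : rowIdx n Ω S = {0} := by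
  rw [rowIdx, h, insert_empty]

theorem colIdx_eq_singleton (h : Ω ∩ S = ∅) : colIdx Ω S = {0} := by
  rw [colIdx, h, insert_empty]

theorem le_of_mem_rowIdx {i : ℕ} (hi : i ∈ rowIdx n Ω S) : i ≤ n := by
  rcases mem_insert.1 hi with rfl | hi
  · exact Nat.zero_le n
  · exact (mem_Icc.1 (mem_sdiff.1 (mem_sdiff.1 hi).1).1).2

theorem le_of_mem_colIdx (hΩ : Ω ⊆ Icc 1 n) {j : ℕ} (hj : j ∈ colIdx Ω S) : j ≤ n := by
  rcases mem_insert.1 hj with rfl | hj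
  · exact Nat.zero_le n
  · exact (mem_Icc.1 (hΩ (mem_inter.1 hj).1)).2

theorem sup_rowIdx (hds : ℓ 0 0 = 0) :
    (rowIdx n Ω S).sup (ℓ · 0) = ((Icc 1 n \ Ω) \ S).sup (ℓ · 0) := by
  simp [rowIdx, hds]

theorem sup_colIdx (hds : ℓ 0 0 = 0) : (colIdx Ω S).sup (ℓ 0) = (Ω ∩ S).sup (ℓ 0 ·) := by
  simp [colIdx, hds]

end transferMatrix

theorem stmt1_general (n η : ℕ) (ℓ : ℕ → ℕ → ℕ)
    (hbound : ∀ i ≤ n, ∀ j ≤ n, ℓ i j ≤ η)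
    (hds : ℓ 0 0 = 0)
    (Ω S : Finset ℕ) (hΩ : Ω ⊆ Finset.Icc 1 n) :
    ((Finset.Icc 1 n \ Ω) \ S).sup (fun i => ℓ i 0) + (Ω ∩ S).sup (fun j => ℓ 0 j)
        ≤ fRank n η ℓ Ω S ∧
      (((Finset.Icc 1 n \ Ω) \ S = ∅ ∨ Ω ∩ S = ∅) →
        fRank n η ℓ Ω S
          = ((Finset.Icc 1 n \ Ω) \ S).sup (fun i => ℓ i 0)
            + (Ω ∩ S).sup (fun j => ℓ 0 j)) := by
  obtain ⟨i, hi, hia⟩ := exists_mem_eq_sup (rowIdx n Ω S) (insert_nonempty _ _) (ℓ · 0)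
  obtain ⟨j, hj, hjb⟩ := exists_mem_eq_sup (colIdx Ω S) (insert_nonempty _ _) (ℓ 0)
  have haη : ℓ i 0 ≤ η := hbound _ (le_of_mem_rowIdx hi) _ (Nat.zero_le n)
  have hbη : ℓ 0 j ≤ η := hbound _ (Nat.zero_le n) _ (le_of_mem_colIdx hΩ hj)
  rw [← sup_rowIdx hds, ← sup_colIdx hds, hia, hjb, fRank_eq_rank_shiftBlockMatrix]
  have hlower := le_rank_shiftBlockMatrix (fun (i : rowIdx n Ω S) (j : colIdx Ω S) => ℓ i j)
    (p₀ := ⟨0, zero_mem_rowIdx⟩) (p := ⟨i, hi⟩) (q₀ := ⟨0, zero_mem_colIdx⟩) (q := ⟨j, hj⟩)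
    hds haη hbη
  refine ⟨hlower, fun hempty => le_antisymm ?_ hlower⟩
  rcases hempty with hA | hB
  · have : Subsingleton (rowIdx n Ω S) := by rw [rowIdx_eq_singleton hA]; infer_instance
    obtain rfl : i = 0 := by simpa [rowIdx_eq_singleton hA] using hi
    exact (rank_shiftBlockMatrix_le_of_subsingleton_left _ ⟨0, zero_mem_rowIdx⟩ hbη
      fun q => hjb ▸ le_sup q.2).trans (by omega)
  · have : Subsingleton (colIdx Ω S) := by rw [colIdx_eq_singleton hB]; infer_instance
    obtain rfl : j = 0 := by simpa [colIdx_eq_singleton hB] using hj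
    exact (rank_shiftBlockMatrix_le_of_subsingleton_right _ ⟨0, zero_mem_colIdx⟩ haη
      fun p => hia ▸ le_sup (f := (ℓ · 0)) p.2).trans (by omega)

theorem stmt1 (n η : ℕ) (hn : 1 ≤ n) (hη : 1 ≤ η) (ℓ : ℕ → ℕ → ℕ)
    (hbound : ∀ i ≤ n, ∀ j ≤ n, ℓ i j ≤ η)
    (hds : ℓ 0 0 = 0) (hii : ∀ i, 1 ≤ i → i ≤ n → ℓ i i = 0)
    (Ω S : Finset ℕ) (hΩ : Ω ⊆ Finset.Icc 1 n) (hS : S ⊆ Finset.Icc 1 n) :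
    ((Finset.Icc 1 n \ Ω) \ S).sup (fun i => ℓ i 0) + (Ω ∩ S).sup (fun j => ℓ 0 j)
        ≤ fRank n η ℓ Ω S ∧
      (((Finset.Icc 1 n \ Ω) \ S = ∅ ∨ Ω ∩ S = ∅) →
        fRank n η ℓ Ω S
          = ((Finset.Icc 1 n \ Ω) \ S).sup (fun i => ℓ i 0)
            + (Ω ∩ S).sup (fun j => ℓ 0 j)) :=
  stmt1_general n η ℓ hbound hds Ω S hΩ
end

section
/- For every fixed state S ⊆ [n], the function Ω ↦ f(Ω,S) is submodular: f(Ω₁,S) + f(Ω₂,S) ≥ f(Ω₁ ∩ Ω₂, S) + f(Ω₁ ∪ Ω₂, S) for all subsets Ω₁, Ω₂ ⊆ [n]. -/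
open Finset

/-!
Let `V` be the span of the columns of a matrix lying in a column set `C`, and `K` the space of
vectors vanishing on a row set `R`; the rank of the `R × C` submatrix is `dim V - dim (V ⊓ K)`.
Passing to `Ω₁ ∩ Ω₂` shrinks the columns (to at most `V₁ ⊓ V₂`) and enlarges the rows (so the
kernel shrinks to `K₁ ⊓ K₂`), and passing to `Ω₁ ∪ Ω₂` does the opposite. Grassmann's formula
`dim (U ⊓ U') + dim (U ⊔ U') = dim U + dim U'`, applied to the `Vᵢ` and to the `Vᵢ ⊓ Kᵢ`, then
gives the inequality.
-/

section RankNullity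

open Module Submodule LinearMap

variable {K E : Type*} [Field K] [AddCommGroup E] [Module K E]

theorem Submodule.finrank_map_add_finrank_inf_ker {W : Type*} [AddCommGroup W] [Module K W]
    (f : E →ₗ[K] W) (p : Submodule K E) [FiniteDimensional K p] :
    finrank K (p.map f) + finrank K ↥(p ⊓ ker f) = finrank K p := by
  have h := finrank_range_add_finrank_ker (f.domRestrict p)
  rw [range_domRestrict, ker_domRestrict] at h
  rw [← h, ← (comapSubtypeEquivOfLe (inf_le_left : p ⊓ ker f ≤ p)).finrank_eq, comap_inf,
    comap_subtype_self, top_inf_eq]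

theorem Submodule.finrank_map_inf_add_finrank_map_sup_le {W₁ W₂ W₃ W₄ : Type*}
    [AddCommGroup W₁] [Module K W₁] [AddCommGroup W₂] [Module K W₂]
    [AddCommGroup W₃] [Module K W₃] [AddCommGroup W₄] [Module K W₄]
    (V₁ V₂ : Submodule K E) [FiniteDimensional K V₁] [FiniteDimensional K V₂]
    {f₁ : E →ₗ[K] W₁} {f₂ : E →ₗ[K] W₂} {g : E →ₗ[K] W₃} {h : E →ₗ[K] W₄}
    (hg : ker f₁ ⊓ ker f₂ ≤ ker g) (hh : ker f₁ ⊔ ker f₂ ≤ ker h) :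
    finrank K ((V₁ ⊓ V₂).map g) + finrank K ((V₁ ⊔ V₂).map h)
      ≤ finrank K (V₁.map f₁) + finrank K (V₂.map f₂) := by
  have hrank₁ := finrank_map_add_finrank_inf_ker f₁ V₁
  have hrank₂ := finrank_map_add_finrank_inf_ker f₂ V₂
  have hrank_inf := finrank_map_add_finrank_inf_ker g (V₁ ⊓ V₂)
  have hrank_sup := finrank_map_add_finrank_inf_ker h (V₁ ⊔ V₂)
  have hker_inf : finrank K ↥((V₁ ⊓ ker f₁) ⊓ (V₂ ⊓ ker f₂)) ≤ finrank K ↥(V₁ ⊓ V₂ ⊓ ker g) :=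
    finrank_mono <| by rw [inf_inf_inf_comm]; exact inf_le_inf_left _ hg
  have hker_sup : finrank K ↥((V₁ ⊓ ker f₁) ⊔ (V₂ ⊓ ker f₂)) ≤ finrank K ↥((V₁ ⊔ V₂) ⊓ ker h) :=
    finrank_mono <| sup_le (inf_le_inf le_sup_left (le_sup_left.trans hh))
      (inf_le_inf le_sup_right (le_sup_right.trans hh))
  have hspan := finrank_sup_add_finrank_inf_eq V₁ V₂
  have hker := finrank_sup_add_finrank_inf_eq (V₁ ⊓ ker f₁) (V₂ ⊓ ker f₂)
  omega

end RankNullity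

section FunLeft

open Module Submodule LinearMap

variable {R M : Type*} [Semiring R] [AddCommMonoid M] [Module R M] {ι ι₁ ι₂ ι₃ : Type*}

theorem LinearMap.ker_funLeft_le {e : ι₁ → ι} {g : ι₃ → ι} (h : Set.range g ⊆ Set.range e) :
    ker (funLeft R M e) ≤ ker (funLeft R M g) := by
  intro v hv
  simp only [mem_ker, funext_iff, funLeft_apply, Pi.zero_apply] at hv ⊢
  intro i
  obtain ⟨j, hj⟩ := h ⟨i, rfl⟩
  rw [← hj, hv]

theorem LinearMap.ker_funLeft_inf_le {e₁ : ι₁ → ι} {e₂ : ι₂ → ι} {g : ι₃ → ι}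
    (h : Set.range g ⊆ Set.range e₁ ∪ Set.range e₂) :
    ker (funLeft R M e₁) ⊓ ker (funLeft R M e₂) ≤ ker (funLeft R M g) := by
  rintro v ⟨hv₁, hv₂⟩
  simp only [SetLike.mem_coe, mem_ker, funext_iff, funLeft_apply, Pi.zero_apply] at hv₁ hv₂ ⊢
  intro i
  rcases h ⟨i, rfl⟩ with ⟨j, hj⟩ | ⟨j, hj⟩
  · rw [← hj, hv₁]
  · rw [← hj, hv₂]

end FunLeft

section Submatrix

open Module Submodule LinearMap

variable {K : Type*} [Field K] {ι κ : Type*}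

theorem Matrix.rank_submatrix_eq_finrank_map_span {ι' κ' : Type*} [Fintype κ']
    (A : Matrix ι κ K) (r : ι' → ι) (c : κ' → κ) :
    (A.submatrix r c).rank = finrank K ((span K (A.col '' Set.range c)).map (funLeft K K r)) := by
  rw [rank_eq_finrank_span_cols, Submodule.map_span, ← Set.range_comp, ← Set.range_comp]
  rfl

theorem Matrix.rank_submatrix_add_rank_submatrix_le {ι₁ ι₂ ι₃ ι₄ κ₁ κ₂ κ₃ κ₄ : Type*}
    [Fintype κ₁] [Fintype κ₂] [Fintype κ₃] [Fintype κ₄] (A : Matrix ι κ K)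
    {r₁ : ι₁ → ι} {r₂ : ι₂ → ι} {r₃ : ι₃ → ι} {r₄ : ι₄ → ι}
    {c₁ : κ₁ → κ} {c₂ : κ₂ → κ} {c₃ : κ₃ → κ} {c₄ : κ₄ → κ}
    (hr₃ : Set.range r₃ ⊆ Set.range r₁ ∪ Set.range r₂)
    (hr₄ : Set.range r₄ ⊆ Set.range r₁ ∩ Set.range r₂)
    (hc₃ : Set.range c₃ ⊆ Set.range c₁ ∩ Set.range c₂)
    (hc₄ : Set.range c₄ ⊆ Set.range c₁ ∪ Set.range c₂) :
    (A.submatrix r₃ c₃).rank + (A.submatrix r₄ c₄).rank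
      ≤ (A.submatrix r₁ c₁).rank + (A.submatrix r₂ c₂).rank := by
  simp only [rank_submatrix_eq_finrank_map_span]
  set V₁ := span K (A.col '' Set.range c₁)
  set V₂ := span K (A.col '' Set.range c₂)
  have : FiniteDimensional K V₁ := .span_of_finite K ((Set.finite_range c₁).image _)
  have : FiniteDimensional K V₂ := .span_of_finite K ((Set.finite_range c₂).image _)
  calc _ ≤ finrank K ((V₁ ⊓ V₂).map (funLeft K K r₃))
          + finrank K ((V₁ ⊔ V₂).map (funLeft K K r₄)) :=
        add_le_add (finrank_mono (map_mono ?_)) (finrank_mono (map_mono ?_))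
    _ ≤ _ := finrank_map_inf_add_finrank_map_sup_le V₁ V₂ (ker_funLeft_inf_le hr₃)
        (sup_le (ker_funLeft_le (hr₄.trans Set.inter_subset_left))
          (ker_funLeft_le (hr₄.trans Set.inter_subset_right)))
  · exact le_inf (span_mono (Set.image_mono (hc₃.trans Set.inter_subset_left)))
      (span_mono (Set.image_mono (hc₃.trans Set.inter_subset_right)))
  · rw [← span_union, ← Set.image_union]
    exact span_mono (Set.image_mono hc₄)

end Submatrix

/-- The transfer matrix of the whole network, with `0` standing for `d` as a row block and for `s`
as a column block; `F_{Ω,S}` is its submatrix on the blocks `rowIdx n Ω S` × `colIdx Ω S`. -/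
def transferMatrix (η : ℕ) (ℓ : ℕ → ℕ → ℕ) : Matrix (ℕ × Fin η) (ℕ × Fin η) (ZMod 2) :=
  Matrix.of fun p q => Dblk η (ℓ p.1 q.1) p.2 q.2

theorem fRank_eq_rank_submatrix (n η : ℕ) (ℓ : ℕ → ℕ → ℕ) (Ω S : Finset ℕ) :
    fRank n η ℓ Ω S = ((transferMatrix η ℓ).submatrix
      (Prod.map (Subtype.val : rowIdx n Ω S → ℕ) id)
      (Prod.map (Subtype.val : colIdx Ω S → ℕ) id)).rank :=
  rfl

theorem Finset.range_prodMap_val_id {α β : Type*} (s : Finset α) :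
    Set.range (Prod.map (Subtype.val : s → α) (id : β → β)) = (s : Set α) ×ˢ Set.univ := by
  rw [Set.range_prodMap, Subtype.range_coe, Set.range_id]

theorem rowIdx_inter (n : ℕ) (Ω₁ Ω₂ S : Finset ℕ) :
    rowIdx n (Ω₁ ∩ Ω₂) S = rowIdx n Ω₁ S ∪ rowIdx n Ω₂ S := by
  ext
  simp only [rowIdx, mem_union, mem_insert, mem_sdiff, mem_inter]
  tauto

theorem rowIdx_union (n : ℕ) (Ω₁ Ω₂ S : Finset ℕ) :
    rowIdx n (Ω₁ ∪ Ω₂) S = rowIdx n Ω₁ S ∩ rowIdx n Ω₂ S := by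
  ext
  simp only [rowIdx, mem_union, mem_insert, mem_sdiff, mem_inter]
  tauto

theorem colIdx_inter (Ω₁ Ω₂ S : Finset ℕ) :
    colIdx (Ω₁ ∩ Ω₂) S = colIdx Ω₁ S ∩ colIdx Ω₂ S := by
  ext
  simp only [colIdx, mem_insert, mem_inter]
  tauto

theorem colIdx_union (Ω₁ Ω₂ S : Finset ℕ) :
    colIdx (Ω₁ ∪ Ω₂) S = colIdx Ω₁ S ∪ colIdx Ω₂ S := by
  ext
  simp only [colIdx, mem_union, mem_insert, mem_inter]
  tauto

theorem stmt2_general (n η : ℕ) (ℓ : ℕ → ℕ → ℕ) (S : Finset ℕ) (Ω₁ Ω₂ : Finset ℕ) :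
    fRank n η ℓ (Ω₁ ∩ Ω₂) S + fRank n η ℓ (Ω₁ ∪ Ω₂) S
      ≤ fRank n η ℓ Ω₁ S + fRank n η ℓ Ω₂ S := by
  simp only [fRank_eq_rank_submatrix]
  apply Matrix.rank_submatrix_add_rank_submatrix_le <;>
    simp only [Finset.range_prodMap_val_id, rowIdx_inter, rowIdx_union, colIdx_inter,
      colIdx_union, coe_union, coe_inter, Set.union_prod, Set.inter_prod, subset_refl]

theorem stmt2 (n η : ℕ) (hn : 1 ≤ n) (hη : 1 ≤ η) (ℓ : ℕ → ℕ → ℕ)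
    (hbound : ∀ i ≤ n, ∀ j ≤ n, ℓ i j ≤ η)
    (hds : ℓ 0 0 = 0) (hii : ∀ i, 1 ≤ i → i ≤ n → ℓ i i = 0)
    (S : Finset ℕ) (hS : S ⊆ Finset.Icc 1 n)
    (Ω₁ Ω₂ : Finset ℕ) (hΩ₁ : Ω₁ ⊆ Finset.Icc 1 n) (hΩ₂ : Ω₂ ⊆ Finset.Icc 1 n) :
    fRank n η ℓ (Ω₁ ∩ Ω₂) S + fRank n η ℓ (Ω₁ ∪ Ω₂) S
      ≤ fRank n η ℓ Ω₁ S + fRank n η ℓ Ω₂ S :=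
  stmt2_general n η ℓ S Ω₁ Ω₂
end

section
/- If det P ≠ 0, then all entries of the row vector μ = (μ_p, μ_1, …, μ_{n+1}) satisfying μ·P = (1, 0, …, 0) are nonnegative: μ_p ≥ 0 and μ_i ≥ 0 for every i ∈ {1,…,n+1}. -/
open Finset

/-! Subtracting the column of `∅` from the column of `{j}` in `μ·P = e₀` leaves, for `j ∈ [n]`,
the equations `∑ᵢ μᵢ aᵢⱼ = 0` with `aᵢⱼ = f([i:n],{j}) - f([i:n],∅)`. Comparing transfer matrices
block by block, `aᵢⱼ ≥ 0` for `i ≤ j` (block column `j` is added), `a_{j+1,j} ≤ 0` (block row `j` is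
removed) and `aᵢⱼ = 0` for `i ≥ j + 2`: there `F` is a single block column, whose rank is the largest
`ℓ_{k,s}` over its rows, attained at `k = i - 1` by monotonicity. A system with this Hessenberg sign
pattern has a nonzero nonnegative solution, built row by row. Extended by `μ_p = ∑ᵢ μᵢ f([i:n],∅)`
it solves `x·P = c e₀` with `c > 0`, so invertibility of `P` gives `μ = c⁻¹ x ≥ 0`. -/

open Matrix

theorem exists_nonneg_sum_mul_eq_zero_of_hessenberg (a : ℕ → ℕ → ℝ) (N : ℕ)
    (hupper : ∀ i j, 1 ≤ i → i ≤ j → j ≤ N → 0 ≤ a i j)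
    (hsub : ∀ j, 1 ≤ j → j ≤ N → a (j + 1) j ≤ 0)
    (hlower : ∀ i j, 1 ≤ j → j + 2 ≤ i → i ≤ N + 1 → a i j = 0) :
    ∃ v : ℕ → ℝ, (∀ i, 0 ≤ v i) ∧ 0 < ∑ i ∈ Icc 1 (N + 1), v i ∧
      ∀ j, 1 ≤ j → j ≤ N → ∑ i ∈ Icc 1 (N + 1), v i * a i j = 0 := by
  induction N with
  | zero => exact ⟨fun _ => 1, fun _ => zero_le_one, by simp, fun _ _ _ => by omega⟩
  | succ N ih =>
    obtain ⟨v, hv_nonneg, hv_pos, hv⟩ := ih (fun i j hi hij hj => hupper i j hi hij (by omega))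
      (fun j hj hjN => hsub j hj (by omega)) (fun i j hj hji hi => hlower i j hj hji (by omega))
    have sum_update (w : ℕ → ℝ) (x : ℝ) (f : ℕ → ℝ) :
        ∑ i ∈ Icc 1 (N + 2), Function.update w (N + 2) x i * f i =
          ∑ i ∈ Icc 1 (N + 1), w i * f i + x * f (N + 2) := by
      rw [sum_Icc_succ_top (by omega), Function.update_self]
      congr 1
      refine sum_congr rfl fun i hi => ?_
      rw [Function.update_of_ne (by simp at hi; omega)]
    -- The new unknown enters only through the subdiagonal entry `b`;
    -- if `b = 0` we restart from `e_{N+2}`.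
    set b := a (N + 2) (N + 1)
    have hb : b ≤ 0 := hsub (N + 1) (by omega) le_rfl
    set ρ := ∑ i ∈ Icc 1 (N + 1), v i * a i (N + 1)
    have hρ : 0 ≤ ρ := sum_nonneg fun i hi =>
      mul_nonneg (hv_nonneg i) (hupper i _ (by simp at hi; omega) (by simp at hi; omega) le_rfl)
    suffices ∃ (w : ℕ → ℝ) (x : ℝ), (∀ i, 0 ≤ w i) ∧ 0 ≤ x ∧ 0 < ∑ i ∈ Icc 1 (N + 1), w i + x ∧
        (∀ j, 1 ≤ j → j ≤ N → ∑ i ∈ Icc 1 (N + 1), w i * a i j = 0) ∧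
        ∑ i ∈ Icc 1 (N + 1), w i * a i (N + 1) + x * b = 0 by
      obtain ⟨w, x, hw_nonneg, hx, hpos, hw, hlast⟩ := this
      refine ⟨Function.update w (N + 2) x, fun i => ?_, ?_, fun j hj hjN => ?_⟩
      · rcases eq_or_ne i (N + 2) with rfl | hi
        · simpa using hx
        · simpa [Function.update_of_ne hi] using hw_nonneg i
      · simpa using (sum_update w x 1).trans_gt (by simpa using hpos)
      · rw [sum_update]
        rcases (show j ≤ N ∨ j = N + 1 by omega) with hjN | rfl
        · rw [hw j hj hjN, hlower _ _ hj (by omega) le_rfl, mul_zero, add_zero]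
        · exact hlast
    rcases hb.lt_or_eq with hb | hb
    · have hx : 0 ≤ ρ / -b := div_nonneg hρ (by linarith)
      refine ⟨v, ρ / -b, hv_nonneg, hx, add_pos_of_pos_of_nonneg hv_pos hx, hv, ?_⟩
      rw [div_neg, neg_mul, div_mul_cancel₀ _ hb.ne, add_neg_cancel]
    · refine ⟨0, 1, fun _ => le_rfl, zero_le_one, by simp, fun j _ _ => by simp, by simp [hb]⟩

theorem rank_vstack_Dblk {ι : Type*} [Fintype ι] [Nonempty ι] (η : ℕ) (m : ι → ℕ)
    (hm : ∀ i, m i ≤ η) :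
    (of fun (p : ι × Fin η) (y : Fin η) => Dblk η (m p.1) p.2 y).rank = univ.sup m := by
  set M := of fun (p : ι × Fin η) (y : Fin η) => Dblk η (m p.1) p.2 y
  set s := univ.sup m
  have hs : s ≤ η := Finset.sup_le fun i _ => hm i
  apply le_antisymm
  · calc M.rank = Mᵀ.rank := (rank_transpose M).symm
      _ ≤ #{y : Fin η | y < s} := by
        refine rank_le_card_of_support_subset _ _ fun y hy => ?_
        by_contra hys
        refine hy (funext fun p => ?_)
        have : ¬ (y : ℕ) < m p.1 := fun h =>
          hys (mem_filter.2 ⟨mem_univ y, h.trans_le (le_sup (f := m) (mem_univ p.1))⟩)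
        simp [M, Dblk, this]
      _ = s := by rw [Fin.card_filter_val_lt, min_eq_right hs]
  · obtain ⟨i₀, -, hi₀⟩ : ∃ i ∈ univ, s = m i := exists_mem_eq_sup univ univ_nonempty m
    have hm₀ := hm i₀
    have hid : M.submatrix (fun t : Fin (m i₀) => (i₀, ⟨t + (η - m i₀), by omega⟩))
        (fun t : Fin (m i₀) => ⟨t, by omega⟩) = 1 := by
      ext t u
      simp only [M, Dblk, of_apply, submatrix_apply, one_apply, Fin.ext_iff]
      split_ifs <;> grind
    calc s = (1 : Matrix (Fin (m i₀)) (Fin (m i₀)) (ZMod 2)).rank := by simp [hi₀]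
      _ ≤ M.rank := hid ▸ rank_submatrix_le _ _ _

theorem fRank_le_fRank_of_subset {n η : ℕ} {ℓ : ℕ → ℕ → ℕ} {Ω S Ω' S' : Finset ℕ}
    (hrow : rowIdx n Ω S ⊆ rowIdx n Ω' S') (hcol : colIdx Ω S ⊆ colIdx Ω' S') :
    fRank n η ℓ Ω S ≤ fRank n η ℓ Ω' S' := by
  unfold fRank
  convert rank_submatrix_le (R := ZMod 2) _
    (fun p : rowIdx n Ω S × Fin η => ((⟨p.1, hrow p.1.2⟩ : rowIdx n Ω' S'), p.2))
    (fun q : colIdx Ω S × Fin η => ((⟨q.1, hcol q.1.2⟩ : colIdx Ω' S'), q.2)) using 2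
  rfl

theorem fRank_eq_sup_of_inter_eq_empty {n η : ℕ} {ℓ : ℕ → ℕ → ℕ} {Ω S : Finset ℕ}
    (hΩS : Ω ∩ S = ∅) (hℓ : ∀ k ∈ rowIdx n Ω S, ℓ k 0 ≤ η) :
    fRank n η ℓ Ω S = (rowIdx n Ω S).sup (ℓ · 0) := by
  have hsource (q : colIdx Ω S) : (q : ℕ) = 0 := by simpa [colIdx, hΩS] using q.2
  have : Unique (colIdx Ω S) :=
    { default := ⟨0, mem_insert_self _ _⟩
      uniq := fun q => Subtype.ext (hsource q) }
  have : Nonempty (rowIdx n Ω S) := ⟨⟨0, mem_insert_self _ _⟩⟩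
  calc fRank n η ℓ Ω S
      = ((of fun (p : rowIdx n Ω S × Fin η) (y : Fin η) => Dblk η (ℓ p.1 0) p.2 y).submatrix
          (Equiv.refl _) (Equiv.uniqueProd _ _)).rank := by
        unfold fRank; congr; ext p q; simp [hsource]
    _ = univ.sup fun k : rowIdx n Ω S => ℓ k 0 := by
        rw [rank_submatrix, rank_vstack_Dblk η (fun k : rowIdx n Ω S => ℓ k 0) fun k => hℓ k k.2]
    _ = (rowIdx n Ω S).sup (ℓ · 0) := by rw [univ_eq_attach]; exact sup_attach _ (ℓ · 0)

/-- `-P_{i,j}` for `i, j ∈ [1, n+1]`. -/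
noncomputable def fCut (n η : ℕ) (ℓ : ℕ → ℕ → ℕ) (i j : ℕ) : ℕ :=
  fRank n η ℓ (Icc i n) (if j = n + 1 then ∅ else {j})

section fCut

variable {n η : ℕ} {ℓ : ℕ → ℕ → ℕ} {i j : ℕ}

theorem fCut_last_le (hij : i ≤ j) (hj : j ≤ n) : fCut n η ℓ i (n + 1) ≤ fCut n η ℓ i j := by
  rw [fCut, fCut, if_pos rfl, if_neg (by omega)]
  exact fRank_le_fRank_of_subset (fun k => by simp [rowIdx]; omega)
    (fun k => by simp [colIdx]; omega)

theorem fCut_succ_le_last (hj : j ≤ n) : fCut n η ℓ (j + 1) j ≤ fCut n η ℓ (j + 1) (n + 1) := by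
  rw [fCut, fCut, if_pos rfl, if_neg (by omega)]
  exact fRank_le_fRank_of_subset (fun k => by simp [rowIdx]; omega) (fun k => by simp [colIdx])

theorem fCut_eq_last (hℓ : ∀ k ≤ n, ℓ k 0 ≤ η)
    (hmono : ∀ i j, 1 ≤ i → i ≤ j → j ≤ n → ℓ i 0 ≤ ℓ j 0)
    (hj : 1 ≤ j) (hji : j + 2 ≤ i) (hi : i ≤ n + 1) :
    fCut n η ℓ i j = fCut n η ℓ i (n + 1) := by
  rw [fCut, fCut, if_pos rfl, if_neg (by omega)]
  have hrows : rowIdx n (Icc i n) ∅ = insert j (rowIdx n (Icc i n) {j}) := by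
    ext k; simp [rowIdx]; omega
  have hℓ' : ∀ S, ∀ k ∈ rowIdx n (Icc i n) S, ℓ k 0 ≤ η := fun S k hk =>
    hℓ k (by simp [rowIdx] at hk; omega)
  rw [fRank_eq_sup_of_inter_eq_empty (by ext; simp; omega) (hℓ' _),
    fRank_eq_sup_of_inter_eq_empty (inter_empty _) (hℓ' _), hrows, sup_insert]
  -- row block `i - 1` survives and its shift dominates that of the removed row block `j`
  refine (max_eq_right
    ((hmono j (i - 1) hj (by omega) (by omega)).trans (le_sup (f := (ℓ · 0)) ?_))).symm
  simp [rowIdx]; omega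

theorem exists_nonneg_sum_mul_fCut_eq_last (hℓ : ∀ k ≤ n, ℓ k 0 ≤ η)
    (hmono : ∀ i j, 1 ≤ i → i ≤ j → j ≤ n → ℓ i 0 ≤ ℓ j 0) :
    ∃ v : ℕ → ℝ, (∀ i, 0 ≤ v i) ∧ 0 < ∑ i ∈ Icc 1 (n + 1), v i ∧
      ∀ j, 1 ≤ j → j ≤ n → ∑ i ∈ Icc 1 (n + 1), v i * fCut n η ℓ i j =
        ∑ i ∈ Icc 1 (n + 1), v i * fCut n η ℓ i (n + 1) := by
  obtain ⟨v, hv_nonneg, hv_pos, hv⟩ := exists_nonneg_sum_mul_eq_zero_of_hessenberg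
    (fun i j => (fCut n η ℓ i j : ℝ) - fCut n η ℓ i (n + 1)) n
    (fun i j _ hij hj => sub_nonneg.2 (by exact_mod_cast fCut_last_le hij hj))
    (fun j _ hj => sub_nonpos.2 (by exact_mod_cast fCut_succ_le_last hj))
    (fun i j hj hji hi => sub_eq_zero.2 (by exact_mod_cast fCut_eq_last hℓ hmono hj hji hi))
  refine ⟨v, hv_nonneg, hv_pos, fun j hj hjn => sub_eq_zero.1 ?_⟩
  simpa only [mul_sub, sum_sub_distrib] using hv j hj hjn

end fCut

theorem Fin.sum_univ_succ_eq_sum_Icc {M : Type*} [AddCommMonoid M] (n : ℕ) (f : ℕ → M) :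
    ∑ i : Fin (n + 1), f (i + 1) = ∑ i ∈ Icc 1 (n + 1), f i := by
  rw [← Ico_add_one_right_eq_Icc, sum_Ico_eq_sum_range,
    Fin.sum_univ_eq_sum_range (fun i => f (i + 1))]
  simp [add_comm]

theorem vecMul_cons_Pmat (n η : ℕ) (ℓ : ℕ → ℕ → ℕ) (c : ℝ) (v : ℕ → ℝ) :
    vecMul (Fin.cons c fun i : Fin (n + 1) => v (i + 1)) (Pmat n η ℓ) =
      Fin.cons (∑ i ∈ Icc 1 (n + 1), v i)
        fun j : Fin (n + 1) => c - ∑ i ∈ Icc 1 (n + 1), v i * fCut n η ℓ i (j + 1) := by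
  ext k
  induction k using Fin.cases with
  | zero =>
    simp [vecMul, dotProduct, Fin.sum_univ_succ, Pmat, ← Fin.sum_univ_succ_eq_sum_Icc]
  | succ j =>
    simp [vecMul, dotProduct, Fin.sum_univ_succ, Pmat, fCut, ← Fin.sum_univ_succ_eq_sum_Icc,
      sub_eq_add_neg]

theorem vecMul_cons_Pmat_of_sum_mul_fCut_eq_last {n η : ℕ} {ℓ : ℕ → ℕ → ℕ} {v : ℕ → ℝ}
    (hv : ∀ j, 1 ≤ j → j ≤ n → ∑ i ∈ Icc 1 (n + 1), v i * fCut n η ℓ i j =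
      ∑ i ∈ Icc 1 (n + 1), v i * fCut n η ℓ i (n + 1)) :
    vecMul (Fin.cons (∑ i ∈ Icc 1 (n + 1), v i * fCut n η ℓ i (n + 1)) fun i => v (i + 1))
      (Pmat n η ℓ) = (∑ i ∈ Icc 1 (n + 1), v i) • fun k => if k = 0 then 1 else 0 := by
  rw [vecMul_cons_Pmat]
  ext k
  induction k using Fin.cases with
  | zero => simp
  | succ j =>
    simp only [Fin.cons_succ, Pi.smul_apply, Fin.succ_ne_zero, if_false, smul_zero, sub_eq_zero]
    rcases (show (j : ℕ) + 1 ≤ n ∨ (j : ℕ) + 1 = n + 1 by omega) with hj | hj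
    · exact (hv (j + 1) (by omega) hj).symm
    · rw [hj]

theorem stmt6_general (n η : ℕ) (ℓ : ℕ → ℕ → ℕ)
    (hbound : ∀ i ≤ n, ∀ j ≤ n, ℓ i j ≤ η)
    (hmono : ∀ i j, 1 ≤ i → i ≤ j → j ≤ n → ℓ i 0 ≤ ℓ j 0)
    (hdet : (Pmat n η ℓ).det ≠ 0)
    (μ : Fin (n + 2) → ℝ)
    (hμ : Matrix.vecMul μ (Pmat n η ℓ) = fun k => if k = 0 then 1 else 0) :
    ∀ k : Fin (n + 2), 0 ≤ μ k := by
  obtain ⟨v, hv_nonneg, hv_pos, hv⟩ :=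
    exists_nonneg_sum_mul_fCut_eq_last (fun k hk => hbound k hk 0 n.zero_le) hmono
  have hμ_eq : μ = (∑ i ∈ Icc 1 (n + 1), v i)⁻¹ •
      Fin.cons (∑ i ∈ Icc 1 (n + 1), v i * fCut n η ℓ i (n + 1)) fun i => v (i + 1) := by
    refine vecMul_injective_of_isUnit ((isUnit_iff_isUnit_det _).2 (isUnit_iff_ne_zero.2 hdet)) ?_
    dsimp only
    rw [hμ, smul_vecMul, vecMul_cons_Pmat_of_sum_mul_fCut_eq_last hv, inv_smul_smul₀ hv_pos.ne']
  intro k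
  rw [hμ_eq]
  refine smul_nonneg (inv_nonneg.2 hv_pos.le) ?_
  induction k using Fin.cases with
  | zero =>
    rw [Fin.cons_zero]
    exact sum_nonneg fun i _ => mul_nonneg (hv_nonneg i) (Nat.cast_nonneg _)
  | succ i => exact hv_nonneg _

theorem stmt6 (n η : ℕ) (hn : 1 ≤ n) (hη : 1 ≤ η) (ℓ : ℕ → ℕ → ℕ)
    (hbound : ∀ i ≤ n, ∀ j ≤ n, ℓ i j ≤ η)
    (hds : ℓ 0 0 = 0) (hii : ∀ i, 1 ≤ i → i ≤ n → ℓ i i = 0)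
    (hmono : ∀ i j, 1 ≤ i → i ≤ j → j ≤ n → ℓ i 0 ≤ ℓ j 0)
    (hdet : (Pmat n η ℓ).det ≠ 0)
    (μ : Fin (n + 2) → ℝ)
    (hμ : Matrix.vecMul μ (Pmat n η ℓ) = fun k => if k = 0 then 1 else 0) :
    ∀ k : Fin (n + 2), 0 ≤ μ k :=
  stmt6_general n η ℓ hbound hmono hdet μ hμ
end

section
/- If there exists j ∈ [n] such that ℓ_{j,s} = ℓ_{j−1,s} = f([j:n],{j}), then det P = 0. -/
open Finset

/-!
Column `j` of `P` equals its last column, because `f([i:n],{j}) = f([i:n],∅) = ℓ_{i-1,s}` for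
every `i`. When the cut `[i:n]` misses every transmitting relay, the transfer matrix is a stack of
blocks `D^{η-ℓ_{k,s}}` in a single column, whose rank is the largest `ℓ_{k,s}` over its row blocks,
i.e. `ℓ_{i-1,s}` by monotonicity (for `i - 1 = j` the hypothesis `ℓ_{j,s} = ℓ_{j-1,s}` is
needed). When `j ∈ [i:n]`, the hypothesis `f([j:n],{j}) = ℓ_{j-1,s}` says that the source
column spans the column space of `F_{[j:n],{j}}`; deleting the row blocks `i, …, j-1` preserves
this, so `F_{[i:n],{j}}` again has the rank of its source column.
-/

namespace Matrix

variable {K : Type*} [Field K] {m m₀ n n₀ : Type*} [Fintype n] [Fintype n₀]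

theorem span_range_col_submatrix_id {o : Type*} (B : Matrix m o K) (r : m₀ → m) :
    Submodule.span K (Set.range (B.submatrix r id).col) =
      (Submodule.span K (Set.range B.col)).map (LinearMap.funLeft K K r) := by
  rw [← Submodule.span_image, ← Set.range_comp]
  rfl

theorem rank_submatrix_rows_eq_of_rank_submatrix_cols_eq (A : Matrix m n K) (r : m₀ → m)
    (c : n₀ → n) (h : (A.submatrix id c).rank = A.rank) :
    (A.submatrix r c).rank = (A.submatrix r id).rank := by
  have := FiniteDimensional.span_of_finite K (Set.finite_range A.col)
  have hspan : Submodule.span K (Set.range (A.submatrix id c).col) =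
      Submodule.span K (Set.range A.col) := by
    refine Submodule.eq_of_le_of_finrank_le
      (Submodule.span_mono (Set.range_comp_subset_range c A.col)) ?_
    rw [← rank_eq_finrank_span_cols, ← rank_eq_finrank_span_cols, h]
  rw [rank_eq_finrank_span_cols, rank_eq_finrank_span_cols, span_range_col_submatrix_id A, ← hspan,
    ← span_range_col_submatrix_id (A.submatrix id c)]
  rfl

theorem rank_le_of_col_eq_zero {η c : ℕ} (A : Matrix m (Fin η) K) (hc : c ≤ η)
    (hA : ∀ p (q : Fin η), c ≤ q → A p q = 0) : A.rank ≤ c := by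
  have hfactor : A = A.submatrix id (Fin.castLE hc) *
      of fun (k : Fin c) (q : Fin η) => if (k : ℕ) = q then (1 : K) else 0 := by
    ext p q
    rw [mul_apply]
    by_cases hq : (q : ℕ) < c
    · rw [Finset.sum_eq_single ⟨q, hq⟩
        (fun k _ hk => by rw [of_apply, if_neg fun h => hk (Fin.ext h), mul_zero]) (by simp)]
      simp [Fin.castLE]
    · rw [hA p q (not_lt.1 hq), eq_comm]
      exact Finset.sum_eq_zero fun k _ => by
        rw [of_apply, if_neg (k.isLt.trans_le (not_lt.1 hq)).ne, mul_zero]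
  rw [hfactor]
  exact (rank_mul_le_left _ _).trans ((rank_le_card_width _).trans_eq (Fintype.card_fin c))

end Matrix

def Dstack (η : ℕ) {ι : Type*} (g : ι → ℕ) : Matrix (ι × Fin η) (Fin η) (ZMod 2) :=
  Matrix.of fun p q => Dblk η (g p.1) p.2 q

theorem rank_Dstack {η c : ℕ} {ι : Type*} [Fintype ι] (g : ι → ℕ) (hc : c ≤ η)
    (hg : ∀ k, g k ≤ c) (k₀ : ι) (hk₀ : g k₀ = c) : (Dstack η g).rank = c := by
  refine le_antisymm (Matrix.rank_le_of_col_eq_zero _ hc fun p q hq => ?_) ?_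
  · have := hg p.1
    simp only [Dstack, Dblk, Matrix.of_apply, ite_eq_right_iff]
    omega
  · have hid : (Dstack η g).submatrix (fun r : Fin c => (k₀, ⟨r + (η - c), by omega⟩))
        (Fin.castLE hc) = 1 := by
      ext r q
      simp [Dstack, Dblk, hk₀, Matrix.one_apply, Fin.ext_iff]
    calc c = (1 : Matrix (Fin c) (Fin c) (ZMod 2)).rank := by simp
      _ ≤ (Dstack η g).rank := hid ▸ Matrix.rank_submatrix_le _ _ _

def blockMatrix (η : ℕ) (ℓ : ℕ → ℕ → ℕ) (R C : Finset ℕ) :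
    Matrix (R × Fin η) (C × Fin η) (ZMod 2) :=
  Matrix.of fun p q => Dblk η (ℓ p.1 q.1) p.2 q.2

section blockMatrix

variable {η : ℕ} {ℓ : ℕ → ℕ → ℕ}

theorem fRank_eq_rank_blockMatrix (n : ℕ) (Ω S : Finset ℕ) :
    fRank n η ℓ Ω S = (blockMatrix η ℓ (rowIdx n Ω S) (colIdx Ω S)).rank :=
  rfl

theorem rank_blockMatrix_singleton_zero (R : Finset ℕ) :
    (blockMatrix η ℓ R {0}).rank = (Dstack η fun k : R => ℓ k 0).rank := by
  have hsrc : (blockMatrix η ℓ R {0}).submatrix id (fun q => (⟨0, mem_singleton_self 0⟩, q)) =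
      Dstack η fun k : R => ℓ k 0 := rfl
  refine le_antisymm ?_ (hsrc ▸ Matrix.rank_submatrix_le _ _ _)
  have hdup : blockMatrix η ℓ R {0} = (Dstack η fun k : R => ℓ k 0).submatrix id Prod.snd := by
    ext p ⟨⟨a, ha⟩, q⟩
    rw [mem_singleton] at ha
    subst ha
    rfl
  exact hdup ▸ Matrix.rank_submatrix_le _ _ _

theorem rank_blockMatrix_of_subset {R R' C : Finset ℕ} (hR : R' ⊆ R) (h0 : 0 ∈ C)
    (h : (blockMatrix η ℓ R C).rank = (Dstack η fun k : R => ℓ k 0).rank) :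
    (blockMatrix η ℓ R' C).rank = (Dstack η fun k : R' => ℓ k 0).rank :=
  (Matrix.rank_submatrix_rows_eq_of_rank_submatrix_cols_eq (blockMatrix η ℓ R C)
    (fun p : R' × Fin η => (⟨p.1, hR p.1.2⟩, p.2)) (fun q => (⟨0, h0⟩, q)) h.symm).symm

theorem fRank_of_disjoint {n c k₀ : ℕ} {Ω S : Finset ℕ} (hd : Ω ∩ S = ∅) (hc : c ≤ η)
    (hle : ∀ k ∈ rowIdx n Ω S, ℓ k 0 ≤ c) (hk₀ : k₀ ∈ rowIdx n Ω S) (hv : ℓ k₀ 0 = c) :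
    fRank n η ℓ Ω S = c := by
  rw [fRank_eq_rank_blockMatrix, colIdx, hd, insert_empty, rank_blockMatrix_singleton_zero]
  exact rank_Dstack _ hc (fun k => hle k k.2) ⟨k₀, hk₀⟩ hv

end blockMatrix

theorem mem_rowIdx_Icc {n i k : ℕ} {S : Finset ℕ} (hi : i ≤ n + 1) :
    k ∈ rowIdx n (Icc i n) S ↔ k = 0 ∨ (1 ≤ k ∧ k < i) ∧ k ∉ S := by
  simp only [rowIdx, mem_insert, mem_sdiff, mem_Icc]
  grind

section sourceMonotone

variable {n η : ℕ} {ℓ : ℕ → ℕ → ℕ}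

theorem le_of_mem_rowIdx_Icc (hds : ℓ 0 0 = 0)
    (hmono : ∀ i j, 1 ≤ i → i ≤ j → j ≤ n → ℓ i 0 ≤ ℓ j 0) {i k : ℕ} {S : Finset ℕ}
    (hi : i ≤ n + 1) (hk : k ∈ rowIdx n (Icc i n) S) : ℓ k 0 ≤ ℓ (i - 1) 0 := by
  rcases (mem_rowIdx_Icc hi).1 hk with rfl | ⟨hk, -⟩
  · rw [hds]
    exact Nat.zero_le _
  · exact hmono k (i - 1) hk.1 (by omega) (by omega)

theorem rank_Dstack_rowIdx_Icc (hds : ℓ 0 0 = 0)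
    (hmono : ∀ i j, 1 ≤ i → i ≤ j → j ≤ n → ℓ i 0 ≤ ℓ j 0) (hbound : ∀ k ≤ n, ℓ k 0 ≤ η)
    {i : ℕ} {S : Finset ℕ} (hi : i ≤ n + 1) (hS : i - 1 ∉ S) :
    (Dstack η fun k : rowIdx n (Icc i n) S => ℓ k 0).rank = ℓ (i - 1) 0 :=
  rank_Dstack _ (hbound _ (by omega)) (fun k => le_of_mem_rowIdx_Icc hds hmono hi k.2)
    ⟨i - 1, (mem_rowIdx_Icc hi).2 (by grind)⟩ rfl

theorem fRank_Icc_empty (hds : ℓ 0 0 = 0)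
    (hmono : ∀ i j, 1 ≤ i → i ≤ j → j ≤ n → ℓ i 0 ≤ ℓ j 0) (hbound : ∀ k ≤ n, ℓ k 0 ≤ η)
    {i : ℕ} (hi : i ≤ n + 1) : fRank n η ℓ (Icc i n) ∅ = ℓ (i - 1) 0 := by
  rw [fRank_eq_rank_blockMatrix, colIdx, inter_empty, insert_empty,
    rank_blockMatrix_singleton_zero]
  exact rank_Dstack_rowIdx_Icc hds hmono hbound hi (notMem_empty _)

theorem fRank_Icc_singleton (hds : ℓ 0 0 = 0)
    (hmono : ∀ i j, 1 ≤ i → i ≤ j → j ≤ n → ℓ i 0 ≤ ℓ j 0) (hbound : ∀ k ≤ n, ℓ k 0 ≤ η)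
    {i j : ℕ} (hj1 : 1 ≤ j) (hjn : j ≤ n) (h1 : ℓ j 0 = ℓ (j - 1) 0)
    (h2 : ℓ (j - 1) 0 = fRank n η ℓ (Icc j n) {j}) (hi : i ≤ n + 1) :
    fRank n η ℓ (Icc i n) {j} = ℓ (i - 1) 0 := by
  rcases lt_or_ge j i with hji | hij
  · -- if `j = i - 1`, row block `j` is missing and `j - 1` attains the maximum instead
    have hd : Icc i n ∩ {j} = ∅ := by
      ext
      simp only [mem_inter, mem_Icc, mem_singleton, notMem_empty, iff_false]
      omega
    refine fRank_of_disjoint hd (hbound _ (by omega))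
      (fun _ => le_of_mem_rowIdx_Icc hds hmono hi) (k₀ := if i - 1 = j then j - 1 else i - 1)
      ((mem_rowIdx_Icc hi).2 ?_) ?_
    · split_ifs <;> simp only [mem_singleton] <;> omega
    · split_ifs with h
      · rw [h, h1]
      · rfl
  · have hcol : colIdx (Icc i n) {j} = colIdx (Icc j n) {j} := by
      ext
      simp only [colIdx, mem_insert, mem_inter, mem_Icc, mem_singleton]
      omega
    have hrows : rowIdx n (Icc i n) {j} ⊆ rowIdx n (Icc j n) {j} := fun k hk => by
      rw [mem_rowIdx_Icc hi, mem_singleton] at hk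
      rw [mem_rowIdx_Icc (by omega), mem_singleton]
      omega
    rw [fRank_eq_rank_blockMatrix, hcol, rank_blockMatrix_of_subset hrows (by simp [colIdx])]
    · exact rank_Dstack_rowIdx_Icc hds hmono hbound hi (by rw [mem_singleton]; omega)
    · rw [← fRank_eq_rank_blockMatrix, ← h2]
      exact (rank_Dstack_rowIdx_Icc hds hmono hbound (by omega) (by rw [mem_singleton]; omega)).symm

end sourceMonotone

theorem stmt9_general (n η : ℕ) (ℓ : ℕ → ℕ → ℕ)
    (hbound : ∀ i ≤ n, ∀ j ≤ n, ℓ i j ≤ η)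
    (hds : ℓ 0 0 = 0)
    (hmono : ∀ i j, 1 ≤ i → i ≤ j → j ≤ n → ℓ i 0 ≤ ℓ j 0)
    (j : ℕ) (hj1 : 1 ≤ j) (hjn : j ≤ n)
    (h1 : ℓ j 0 = ℓ (j - 1) 0)
    (h2 : ℓ (j - 1) 0 = fRank n η ℓ (Finset.Icc j n) {j}) :
    (Pmat n η ℓ).det = 0 := by
  have hbound₀ : ∀ k ≤ n, ℓ k 0 ≤ η := fun k hk => hbound k hk 0 (Nat.zero_le n)
  have hj0 : j ≠ 0 := by omega
  have hjlast : j ≠ n + 1 := by omega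
  refine Matrix.det_zero_of_column_eq (i := ⟨j, by omega⟩) (j := Fin.last (n + 1))
    (Fin.ne_of_val_ne hjlast) fun k => ?_
  rcases Fin.eq_zero_or_eq_succ k with rfl | ⟨k, rfl⟩
  · simp [Pmat, hj0]
  · simp [Pmat, hj0, hjlast,
      fRank_Icc_singleton hds hmono hbound₀ hj1 hjn h1 h2 (i := k + 1) (by omega),
      fRank_Icc_empty hds hmono hbound₀ (i := k + 1) (by omega)]

theorem stmt9 (n η : ℕ) (hn : 1 ≤ n) (hη : 1 ≤ η) (ℓ : ℕ → ℕ → ℕ)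
    (hbound : ∀ i ≤ n, ∀ j ≤ n, ℓ i j ≤ η)
    (hds : ℓ 0 0 = 0) (hii : ∀ i, 1 ≤ i → i ≤ n → ℓ i i = 0)
    (hmono : ∀ i j, 1 ≤ i → i ≤ j → j ≤ n → ℓ i 0 ≤ ℓ j 0)
    (j : ℕ) (hj1 : 1 ≤ j) (hjn : j ≤ n)
    (h1 : ℓ j 0 = ℓ (j - 1) 0)
    (h2 : ℓ (j - 1) 0 = fRank n η ℓ (Finset.Icc j n) {j}) :
    (Pmat n η ℓ).det = 0 :=
  stmt9_general n η ℓ hbound hds hmono j hj1 hjn h1 h2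
end

section
/- Let k ≥ 1 and integers 1 ≤ a_1 ≤ b_1 < a_2 ≤ b_2 < … < a_k ≤ b_k ≤ n, set a_{k+1} := n+1, and let Ω = ∪_{i=1}^{k} [a_i:b_i]. Then g(Ω) ≥ ∑_{i=1}^{k+1} g([a_i:n]) − ∑_{i=1}^{k} g([b_i+1:n]) (where [a:b] = {a,…,b}, empty when a > b). -/
/-!
Write `Ω j` for the union of the first `j` intervals and `S j := Ω j ∪ [a_{j+1}:n]`, so that
`S 0 = [a_1:n]` and `S k = Ω`. For `1 ≤ j ≤ k` the sets `S j` and `[b_j+1:n]` have union `S (j-1)`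
and intersection `[a_{j+1}:n]`, because `Ω j` lies below `b_j + 1`. Submodularity therefore gives
`g(S (j-1)) + g([a_{j+1}:n]) ≤ g(S j) + g([b_j+1:n])`, and these `k` inequalities telescope.
-/

open Finset

def intervalUnion (a b : ℕ → ℕ) (j : ℕ) : Finset ℕ :=
  (Icc 1 j).biUnion fun i => Icc (a i) (b i)

@[simp]
lemma intervalUnion_zero (a b : ℕ → ℕ) : intervalUnion a b 0 = ∅ := by
  simp [intervalUnion]

lemma intervalUnion_succ (a b : ℕ → ℕ) (j : ℕ) :
    intervalUnion a b (j + 1) = intervalUnion a b j ∪ Icc (a (j + 1)) (b (j + 1)) := by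
  rw [intervalUnion, intervalUnion, ← insert_Icc_right_eq_Icc_add_one (by omega), biUnion_insert,
    union_comm]

lemma union_Icc_union_Icc_add_one {L : Finset ℕ} {a b c n : ℕ} (hab : a ≤ b + 1)
    (hbc : b + 1 ≤ c) (hbn : b ≤ n) :
    L ∪ Icc a b ∪ Icc c n ∪ Icc (b + 1) n = L ∪ Icc a n := by
  have : Icc a b ∪ (Icc c n ∪ Icc (b + 1) n) = Icc a n := by
    ext x
    simp only [mem_union, mem_Icc]
    omega
  rw [union_assoc, union_assoc, this]

lemma union_Icc_inter_Icc_add_one {M : Finset ℕ} {b c n : ℕ} (hM : ∀ x ∈ M, x ≤ b)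
    (hbc : b + 1 ≤ c) :
    (M ∪ Icc c n) ∩ Icc (b + 1) n = Icc c n := by
  have hdisj : Disjoint M (Icc (b + 1) n) :=
    disjoint_left.mpr fun x hx hx' => by have := hM x hx; have := mem_Icc.mp hx'; omega
  rw [union_inter_distrib_right, disjoint_iff_inter_eq_empty.mp hdisj, empty_union,
    inter_eq_left.mpr (Icc_subset_Icc_left hbc)]

section Submodular

variable {n : ℕ} {g : Finset ℕ → ℝ}

lemma submodular_add_Icc_step
    (hsub : ∀ A ⊆ Icc 1 n, ∀ B ⊆ Icc 1 n, g (A ∪ B) + g (A ∩ B) ≤ g A + g B)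
    {L : Finset ℕ} {a b c : ℕ} (hL : L ⊆ Ico 1 a) (ha : 1 ≤ a) (hab : a ≤ b + 1)
    (hbc : b + 1 ≤ c) (hbn : b ≤ n) :
    g (L ∪ Icc a n) + g (Icc c n) ≤ g (L ∪ Icc a b ∪ Icc c n) + g (Icc (b + 1) n) := by
  have hLb : ∀ x ∈ L ∪ Icc a b, x ≤ b := by
    intro x hx
    rcases mem_union.mp hx with hx | hx
    · have := mem_Ico.mp (hL hx); omega
    · exact (mem_Icc.mp hx).2
  have hA : L ∪ Icc a b ∪ Icc c n ⊆ Icc 1 n := by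
    refine union_subset (union_subset ?_ ?_) (Icc_subset_Icc_left (by omega))
    · intro x hx
      have := mem_Ico.mp (hL hx)
      rw [mem_Icc]
      omega
    · exact Icc_subset_Icc ha hbn
  have hB : Icc (b + 1) n ⊆ Icc 1 n := Icc_subset_Icc_left (by omega)
  have := hsub _ hA _ hB
  rwa [union_Icc_union_Icc_add_one hab hbc hbn, union_Icc_inter_Icc_add_one hLb hbc] at this

end Submodular

section Intervals

variable {k : ℕ} {a b : ℕ → ℕ}
  (hab : ∀ i, 1 ≤ i → i ≤ k → a i ≤ b i) (hba : ∀ i, 1 ≤ i → i ≤ k → b i < a (i + 1))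
include hab hba

lemma left_endpoint_mono {i j : ℕ} (hi : 1 ≤ i) (hij : i ≤ j) (hj : j ≤ k + 1) :
    a i ≤ a j := by
  induction j, hij using Nat.le_induction with
  | base => rfl
  | succ j hij ih =>
    have := hab j (by omega) (by omega)
    have := hba j (by omega) (by omega)
    have := ih (by omega)
    omega

lemma intervalUnion_subset_Ico (ha1 : 1 ≤ a 1) {j : ℕ} (hj : j ≤ k) :
    intervalUnion a b j ⊆ Ico 1 (a (j + 1)) := by
  induction j with
  | zero => simp
  | succ j ih =>
    have := left_endpoint_mono hab hba (i := 1) le_rfl (by omega : 1 ≤ j + 1) (by omega)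
    have := hab (j + 1) (by omega) hj
    have := hba (j + 1) (by omega) hj
    rw [intervalUnion_succ, union_subset_iff]
    exact ⟨(ih (by omega)).trans (Ico_subset_Ico_right (by omega)),
      Icc_subset_Ico_iff (by omega) |>.mpr ⟨by omega, by omega⟩⟩

lemma sum_Icc_sub_sum_Icc_le_intervalUnion_union {n : ℕ} {g : Finset ℕ → ℝ}
    (hsub : ∀ A ⊆ Icc 1 n, ∀ B ⊆ Icc 1 n, g (A ∪ B) + g (A ∩ B) ≤ g A + g B)
    (ha1 : 1 ≤ a 1) (hak : a (k + 1) = n + 1) {j : ℕ} (hj : j ≤ k) :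
    ∑ i ∈ Icc 1 (j + 1), g (Icc (a i) n) - ∑ i ∈ Icc 1 j, g (Icc (b i + 1) n)
      ≤ g (intervalUnion a b j ∪ Icc (a (j + 1)) n) := by
  induction j with
  | zero => simp
  | succ j ih =>
    have hpos : 1 ≤ a (j + 1) :=
      ha1.trans (left_endpoint_mono hab hba le_rfl (by omega) (by omega))
    have hab' := hab (j + 1) (by omega) hj
    have hba' := hba (j + 1) (by omega) hj
    have hbn : b (j + 1) ≤ n := by
      have := left_endpoint_mono hab hba (i := j + 1 + 1) (j := k + 1) (by omega) (by omega) le_rfl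
      omega
    have hstep := submodular_add_Icc_step hsub
      (intervalUnion_subset_Ico hab hba ha1 (j := j) (by omega)) hpos (by omega) hba' hbn
    rw [← intervalUnion_succ] at hstep
    rw [sum_Icc_succ_top (by omega : 1 ≤ j + 2),
      sum_Icc_succ_top (by omega : 1 ≤ j + 1) (fun i => g (Icc (b i + 1) n))]
    linarith [ih (by omega)]

end Intervals

theorem stmt18_general (n : ℕ) (g : Finset ℕ → ℝ)
    (hsub : ∀ A ⊆ Finset.Icc 1 n, ∀ B ⊆ Finset.Icc 1 n,
      g (A ∪ B) + g (A ∩ B) ≤ g A + g B)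
    (k : ℕ) (a b : ℕ → ℕ)
    (ha1 : 1 ≤ a 1)
    (hab : ∀ i, 1 ≤ i → i ≤ k → a i ≤ b i)
    (hba : ∀ i, 1 ≤ i → i < k → b i < a (i + 1))
    (hbk : b k ≤ n) (hak1 : a (k + 1) = n + 1) :
    (∑ i ∈ Finset.Icc 1 (k + 1), g (Finset.Icc (a i) n))
        - ∑ i ∈ Finset.Icc 1 k, g (Finset.Icc (b i + 1) n)
      ≤ g ((Finset.Icc 1 k).biUnion fun i => Finset.Icc (a i) (b i)) := by
  have hba' : ∀ i, 1 ≤ i → i ≤ k → b i < a (i + 1) := by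
    intro i hi hik
    rcases hik.lt_or_eq with hik | rfl
    · exact hba i hi hik
    · omega
  have := sum_Icc_sub_sum_Icc_le_intervalUnion_union hab hba' hsub ha1 hak1 le_rfl
  rwa [hak1, Icc_eq_empty (by omega : ¬n + 1 ≤ n), union_empty] at this

theorem stmt18 (n : ℕ) (hn : 1 ≤ n) (g : Finset ℕ → ℝ)
    (hsub : ∀ A ⊆ Finset.Icc 1 n, ∀ B ⊆ Finset.Icc 1 n,
      g (A ∪ B) + g (A ∩ B) ≤ g A + g B)
    (k : ℕ) (hk : 1 ≤ k) (a b : ℕ → ℕ)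
    (ha1 : 1 ≤ a 1)
    (hab : ∀ i, 1 ≤ i → i ≤ k → a i ≤ b i)
    (hba : ∀ i, 1 ≤ i → i < k → b i < a (i + 1))
    (hbk : b k ≤ n) (hak1 : a (k + 1) = n + 1) :
    (∑ i ∈ Finset.Icc 1 (k + 1), g (Finset.Icc (a i) n))
        - ∑ i ∈ Finset.Icc 1 k, g (Finset.Icc (b i + 1) n)
      ≤ g ((Finset.Icc 1 k).biUnion fun i => Finset.Icc (a i) (b i)) :=
  stmt18_general n g hsub k a b ha1 hab hba hbk hak1
end
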